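/- A vertex a of a finite simple graph G is contained in some minimal local set if and only if there exists A ⊆ V such that A is full cut-rank but A ∪ {a} is not full cut-rank. -/
import Mathlib


open Finset
open scoped Classical symmDiff

variable {V : Type*} [Fintype V] [DecidableEq V]

/-- The odd neighborhood of a set of vertices `D`: vertices having an odd
number of neighbors in `D`. -/
noncomputable def oddNbhd (G : SimpleGraph V) (D : Finset V) : Finset V :=
  Finset.univ.filter fun v => Odd (D.filter (G.Adj v)).card

/-- The cut-rank of `A`: the rank over `F₂` of the cut matrix between `A` and its complement. -/
noncomputable def cutrk (G : SimpleGraph V) (A : Finset V) : ℕ :=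
  (Matrix.of fun (a : {x // x ∈ A}) (b : {x // x ∈ Aᶜ}) =>
    if G.Adj a.1 b.1 then (1 : ZMod 2) else 0).rank

/-- A local set: a nonempty set of the form `D ∪ Odd(D)`. -/
noncomputable def IsLocalSet (G : SimpleGraph V) (A : Finset V) : Prop :=
  A.Nonempty ∧ ∃ D : Finset V, A = D ∪ oddNbhd G D

/-- A minimal local set: a local set minimal by inclusion. -/
noncomputable def IsMLS (G : SimpleGraph V) (A : Finset V) : Prop :=
  IsLocalSet G A ∧ ∀ B ⊂ A, ¬ IsLocalSet G B

lemma zmod2_eq_one_of_ne_zero : ∀ x : ZMod 2, x ≠ 0 → x = 1 := by decide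

lemma natCast_zmod2_eq_zero_iff (n : ℕ) : ((n : ZMod 2) = 0) ↔ ¬ Odd n := by
  rw [ZMod.natCast_eq_zero_iff, Nat.odd_iff]
  omega

lemma mem_oddNbhd_iff (G : SimpleGraph V) (D : Finset V) (b : V) :
    b ∈ oddNbhd G D ↔ Odd ((D.filter fun v => G.Adj b v).card) := by
  simp [oddNbhd]

lemma sum_row (G : SimpleGraph V) (A D : Finset V) (hD : D ⊆ A) (b : V) :
    (∑ i : {x // x ∈ A}, (if i.1 ∈ D then (1 : ZMod 2) else 0) *
      (if G.Adj i.1 b then (1 : ZMod 2) else 0)) =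
    (((D.filter fun v => G.Adj b v).card : ℕ) : ZMod 2) := by
  rw [Finset.sum_coe_sort A
    (fun v => (if v ∈ D then (1 : ZMod 2) else 0) * (if G.Adj v b then 1 else 0))]
  have h1 : ∀ v, (if v ∈ D then (1 : ZMod 2) else 0) * (if G.Adj v b then 1 else 0) =
      (if v ∈ D ∧ G.Adj v b then (1 : ZMod 2) else 0) := by
    intro v
    by_cases h : v ∈ D <;> by_cases h' : G.Adj v b <;> simp [h, h']
  simp_rw [h1]
  rw [Finset.sum_boole]
  congr 2
  ext v
  simp only [Finset.mem_filter]
  constructor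
  · rintro ⟨_, hvD, hadj⟩
    exact ⟨hvD, G.adj_symm hadj⟩
  · rintro ⟨hvD, hadj⟩
    exact ⟨hD hvD, hvD, G.adj_symm hadj⟩

/-- Non-full cut-rank iff there's a nonempty `D ⊆ A` with `D ∪ Odd(D) ⊆ A`. -/
lemma cutrk_ne_card_iff (G : SimpleGraph V) (A : Finset V) :
    cutrk G A ≠ A.card ↔
      ∃ D : Finset V, D.Nonempty ∧ D ⊆ A ∧ D ∪ oddNbhd G D ⊆ A := by
  have hLI : cutrk G A = A.card ↔ LinearIndependent (ZMod 2)
      (fun a : {x // x ∈ A} => fun b : {x // x ∈ Aᶜ} =>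
        if G.Adj a.1 b.1 then (1 : ZMod 2) else 0) := by
    rw [cutrk, Matrix.rank_eq_finrank_span_row, ← Fintype.card_coe A,
      linearIndependent_iff_card_eq_finrank_span, Set.finrank]
    exact eq_comm
  rw [Ne, hLI, Fintype.not_linearIndependent_iff]
  constructor
  · rintro ⟨g, hg, i, hgi⟩
    set D : Finset V := Finset.univ.filter (fun v => ∃ hv : v ∈ A, g ⟨v, hv⟩ ≠ 0) with hDdef
    have hmemD : ∀ v, v ∈ D ↔ ∃ hv : v ∈ A, g ⟨v, hv⟩ ≠ 0 := by
      intro v; simp [hDdef]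
    have hDA : D ⊆ A := fun v hv => ((hmemD v).1 hv).choose
    have hDne : D.Nonempty := ⟨i.1, (hmemD i.1).2 ⟨i.2, by simpa using hgi⟩⟩
    have hgind : ∀ j : {x // x ∈ A}, g j = if j.1 ∈ D then (1 : ZMod 2) else 0 := by
      intro j
      by_cases hj : j.1 ∈ D
      · obtain ⟨hv, hne⟩ := (hmemD j.1).1 hj
        have heq : (⟨j.1, hv⟩ : {x // x ∈ A}) = j := rfl
        rw [heq] at hne
        simp [hj, zmod2_eq_one_of_ne_zero _ hne]
      · simp only [hj, if_neg, ite_false]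
        by_contra hne
        exact hj ((hmemD j.1).2 ⟨j.2, hne⟩)
    refine ⟨D, hDne, hDA, ?_⟩
    intro b hb
    rcases Finset.mem_union.1 hb with hb | hb
    · exact hDA hb
    · by_contra hbA
      have hbc : b ∈ Aᶜ := by simpa [Finset.mem_compl] using hbA
      have hzero := congr_fun hg ⟨b, hbc⟩
      simp only [Finset.sum_apply, Pi.smul_apply, Pi.zero_apply, smul_eq_mul] at hzero
      simp_rw [hgind] at hzero
      rw [sum_row G A D hDA b, natCast_zmod2_eq_zero_iff] at hzero
      rw [mem_oddNbhd_iff] at hb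
      exact hzero hb
  · rintro ⟨D, hDne, hDA, hunion⟩
    refine ⟨fun i : {x // x ∈ A} => if i.1 ∈ D then (1 : ZMod 2) else 0, ?_, ?_⟩
    · funext b
      have hb : b.1 ∉ A := Finset.mem_compl.1 b.2
      have hodd : b.1 ∉ oddNbhd G D := fun hmem =>
        hb (hunion (Finset.mem_union_right _ hmem))
      rw [mem_oddNbhd_iff] at hodd
      simp only [Finset.sum_apply, Pi.smul_apply, Pi.zero_apply, smul_eq_mul]
      rw [sum_row G A D hDA b.1, natCast_zmod2_eq_zero_iff]
      exact hodd
    · obtain ⟨d, hd⟩ := hDne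
      exact ⟨⟨d, hDA hd⟩, by simp [hd]⟩

lemma oddNbhd_empty (G : SimpleGraph V) : oddNbhd G (∅ : Finset V) = ∅ := by
  simp [oddNbhd, Nat.odd_iff]

/-- Non-full cut-rank iff `A` contains a local set. -/
lemma cutrk_ne_card_iff_local (G : SimpleGraph V) (A : Finset V) :
    cutrk G A ≠ A.card ↔ ∃ L : Finset V, IsLocalSet G L ∧ L ⊆ A := by
  rw [cutrk_ne_card_iff]
  constructor
  · rintro ⟨D, hDne, hDA, hunion⟩
    refine ⟨D ∪ oddNbhd G D, ⟨?_, D, rfl⟩, hunion⟩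
    exact hDne.mono Finset.subset_union_left
  · rintro ⟨L, ⟨hLne, D, rfl⟩, hLA⟩
    refine ⟨D, ?_, ?_, hLA⟩
    · rcases Finset.eq_empty_or_nonempty D with h | h
      · rw [h, oddNbhd_empty] at hLne
        simp at hLne
      · exact h
    · exact Finset.subset_union_left.trans hLA

/-- Every local set contains a minimal local set. -/
lemma exists_MLS_subset (G : SimpleGraph V) (L : Finset V) (h : IsLocalSet G L) :
    ∃ M : Finset V, IsMLS G M ∧ M ⊆ L := by
  induction L using Finset.strongInduction with
  | _ L ih =>
    by_cases hm : ∀ B ⊂ L, ¬ IsLocalSet G B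
    · exact ⟨L, ⟨h, hm⟩, Finset.Subset.refl _⟩
    · push_neg at hm
      obtain ⟨B, hBL, hB⟩ := hm
      obtain ⟨M, hM, hML⟩ := ih B hBL hB
      exact ⟨M, hM, hML.trans hBL.subset⟩

theorem mem_MLS_iff (G : SimpleGraph V) (a : V) :
    (∃ L : Finset V, IsMLS G L ∧ a ∈ L) ↔
      ∃ A : Finset V, cutrk G A = A.card ∧ cutrk G (insert a A) ≠ (insert a A).card := by
  constructor
  · rintro ⟨L, ⟨hLloc, hmin⟩, haL⟩
    refine ⟨L.erase a, ?_, ?_⟩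
    · by_contra hne
      obtain ⟨L', hL', hL'sub⟩ := (cutrk_ne_card_iff_local G _).1 hne
      exact hmin L' (hL'sub.trans_ssubset (Finset.erase_ssubset haL)) hL'
    · rw [Finset.insert_erase haL]
      exact (cutrk_ne_card_iff_local G L).2 ⟨L, hLloc, Finset.Subset.refl _⟩
  · rintro ⟨A, hfull, hnotfull⟩
    obtain ⟨L, hLloc, hLsub⟩ := (cutrk_ne_card_iff_local G _).1 hnotfull
    obtain ⟨M, hM, hML⟩ := exists_MLS_subset G L hLloc
    refine ⟨M, hM, ?_⟩
    by_contra haM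
    refine (cutrk_ne_card_iff_local G A).2 ⟨M, hM.1, ?_⟩ hfull
    intro x hx
    have := hML.trans hLsub hx
    rcases Finset.mem_insert.1 this with h | h
    · exact absurd (h ▸ hx) haM
    · exact h
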